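/- arXiv:2108.08512 — 5 statements merged into one kernel-verified Lean document; each statement's English description precedes it below -/
import Mathlib

section
/- Lemma A.3 (Maximal Bernstein inequality in first-moment form): Let F be a finite index set and let (Q_i(f))_{f∈F}, i = 1,…,m, be random vectors that are independent across i, with E Q_i(f) = 0 for all i and f, (1/m) Σ_{i=1}^m E|Q_i(f)| ≤ σ_Q for every f ∈ F, and |Q_i(f)| ≤ M_Q almost surely for all i, f. Then there exists a universal constant c > 0 such that E[ max_{f∈F} | (1/m) Σ_{i=1}^m Q_i(f) | ] ≤ c ( σ_Q + M_Q H / m ), where H = 1 ∨ log|F|. -/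
/-! Take `t = 1 / M_Q`. Since `eˣ ≤ 1 + x + x²` for `|x| ≤ 1` and `Q² ≤ M_Q |Q|`, a centred summand
satisfies `E exp(±t Q_i(f)) ≤ exp(t E|Q_i(f)|)`, so by independence the sums `S_f = Σ_i Q_i(f)` have
`E exp(±t S_f) ≤ exp(t m σ_Q)`. Jensen's inequality and the bound of `exp(t max_f |S_f|)` by the sum
of the `2|F|` exponentials `exp(±t S_f)` give `exp(t E max_f |S_f|) ≤ 2|F| exp(t m σ_Q)`, that is
`E max_f |S_f| ≤ m σ_Q + M_Q log(2|F|)`; dividing by `m` gives the claim with `c = 2`. -/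

open MeasureTheory ProbabilityTheory Real

lemma Real.exp_mul_iSup_abs_le_sum {ι : Type*} [Fintype ι] [Nonempty ι] (y : ι → ℝ) (t : ℝ) :
    exp (t * ⨆ f, |y f|) ≤ ∑ f, (exp (t * y f) + exp (-t * y f)) := by
  obtain ⟨g, hg⟩ := Finite.exists_max fun f ↦ |y f|
  have hsup : ⨆ f, |y f| = |y g| :=
    le_antisymm (ciSup_le hg) (le_ciSup (f := fun f ↦ |y f|) (Finite.bddAbove_range _) g)
  calc exp (t * ⨆ f, |y f|) ≤ exp (t * y g) + exp (-t * y g) := by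
        rw [hsup]
        rcases abs_cases (y g) with ⟨h, -⟩ | ⟨h, -⟩
        · rw [h]
          exact le_add_of_nonneg_right (exp_pos _).le
        · rw [h, mul_neg, ← neg_mul]
          exact le_add_of_nonneg_left (exp_pos _).le
    _ ≤ ∑ f, (exp (t * y f) + exp (-t * y f)) :=
        Finset.single_le_sum (f := fun f ↦ exp (t * y f) + exp (-t * y f))
          (fun f _ ↦ by positivity) (Finset.mem_univ g)

lemma Real.log_two_mul_le_two_mul_max_one_log {x : ℝ} (hx : 0 < x) :
    log (2 * x) ≤ 2 * max 1 (log x) := by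
  rw [log_mul two_ne_zero hx.ne']
  linarith [log_two_lt_d9, le_max_left 1 (log x), le_max_right 1 (log x)]

namespace ProbabilityTheory

variable {Ω : Type*} [MeasurableSpace Ω] {μ : Measure Ω}

lemma mgf_le_exp_of_abs_le [IsProbabilityMeasure μ] {X : Ω → ℝ} {M t : ℝ}
    (hX : Integrable X μ) (h0 : μ[X] = 0) (hb : ∀ᵐ ω ∂μ, |X ω| ≤ M) (ht : |t| * M ≤ 1) :
    mgf X μ t ≤ exp (t ^ 2 * M * ∫ ω, |X ω| ∂μ) := by
  have hquad : ∀ᵐ ω ∂μ, exp (t * X ω) ≤ 1 + t * X ω + t ^ 2 * M * |X ω| := by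
    filter_upwards [hb] with ω hω
    have htX : |t * X ω| ≤ 1 := by
      rw [abs_mul]
      exact (mul_le_mul_of_nonneg_left hω (abs_nonneg t)).trans ht
    have hsq : (t * X ω) ^ 2 ≤ t ^ 2 * M * |X ω| := by
      rw [mul_pow, ← sq_abs (X ω), mul_assoc]
      gcongr
      rw [sq]
      exact mul_le_mul_of_nonneg_right hω (abs_nonneg _)
    linarith [(abs_le.1 (abs_exp_sub_one_sub_id_le htX)).2]
  have hint : Integrable (fun ω ↦ 1 + t * X ω + t ^ 2 * M * |X ω|) μ :=
    ((integrable_const 1).add (hX.const_mul t)).add (hX.abs.const_mul _)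
  calc mgf X μ t ≤ ∫ ω, (1 + t * X ω + t ^ 2 * M * |X ω|) ∂μ :=
        integral_mono_ae (integrable_exp_mul_of_mem_Icc hX.aemeasurable
          (hb.mono fun ω hω ↦ abs_le.1 hω)) hint hquad
    _ = t ^ 2 * M * ∫ ω, |X ω| ∂μ + 1 := by
        have hlin : Integrable (fun ω ↦ 1 + t * X ω) μ := (integrable_const 1).add (hX.const_mul t)
        rw [integral_add hlin (hX.abs.const_mul _),
          integral_add (integrable_const 1) (hX.const_mul t), integral_const_mul,
          integral_const_mul, h0]
        simp only [integral_const, probReal_univ, smul_eq_mul]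
        ring
    _ ≤ exp (t ^ 2 * M * ∫ ω, |X ω| ∂μ) := add_one_le_exp _

lemma iIndepFun.mgf_sum_le_exp_of_abs_le {κ : Type*} [Fintype κ] {X : κ → Ω → ℝ} {M t : ℝ}
    (hindep : iIndepFun X μ) (hX : ∀ i, Integrable (X i) μ) (h0 : ∀ i, μ[X i] = 0)
    (hb : ∀ i, ∀ᵐ ω ∂μ, |X i ω| ≤ M) (ht : |t| * M ≤ 1) :
    mgf (∑ i, X i) μ t ≤ exp (t ^ 2 * M * ∑ i, ∫ ω, |X i ω| ∂μ) := by
  have := hindep.isProbabilityMeasure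
  rw [hindep.mgf_sum₀ (fun i ↦ (hX i).aemeasurable), Finset.mul_sum, exp_sum]
  exact Finset.prod_le_prod (fun i _ ↦ mgf_nonneg)
    fun i _ ↦ mgf_le_exp_of_abs_le (hX i) (h0 i) (hb i) ht

lemma integral_iSup_abs_le_of_mgf_le [IsProbabilityMeasure μ] {ι : Type*} [Fintype ι]
    [Nonempty ι] {Y : ι → Ω → ℝ} {t a : ℝ} (ht : 0 < t) (hY : ∀ f, AEMeasurable (Y f) μ)
    (hint : ∀ f s, |s| = t → Integrable (fun ω ↦ exp (s * Y f ω)) μ)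
    (hmgf : ∀ f s, |s| = t → mgf (Y f) μ s ≤ exp (t * a)) :
    ∫ ω, ⨆ f, |Y f ω| ∂μ ≤ a + log (2 * Fintype.card ι) / t := by
  set G : Ω → ℝ := fun ω ↦ ⨆ f, |Y f ω|
  have hpos : |t| = t := abs_of_pos ht
  have hneg : |-t| = t := (abs_neg t).trans hpos
  have hsum_int : Integrable (fun ω ↦ ∑ f, (exp (t * Y f ω) + exp (-t * Y f ω))) μ :=
    integrable_finsetSum _ fun f _ ↦ (hint f t hpos).add (hint f (-t) hneg)
  have hG_meas : AEMeasurable G μ := AEMeasurable.iSup fun f ↦ (hY f).abs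
  have hexpG_int : Integrable (fun ω ↦ exp (t * G ω)) μ := by
    refine hsum_int.mono' (hG_meas.const_mul t).exp.aestronglyMeasurable (ae_of_all _ fun ω ↦ ?_)
    rw [norm_of_nonneg (exp_pos _).le]
    exact exp_mul_iSup_abs_le_sum _ t
  have hG_int : Integrable G μ := by
    refine (hexpG_int.div_const t).mono' hG_meas.aestronglyMeasurable (ae_of_all _ fun ω ↦ ?_)
    rw [norm_of_nonneg (Real.iSup_nonneg fun f ↦ abs_nonneg _), le_div_iff₀ ht, mul_comm]
    linarith [add_one_le_exp (t * G ω)]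
  have hjensen : exp (t * ∫ ω, G ω ∂μ) ≤ ∫ ω, exp (t * G ω) ∂μ := by
    have h := convexOn_exp.map_integral_le continuous_exp.continuousOn isClosed_univ
      (ae_of_all _ fun ω ↦ Set.mem_univ _) (hG_int.const_mul t) hexpG_int
    rwa [integral_const_mul] at h
  have hunion : ∫ ω, exp (t * G ω) ∂μ ≤ 2 * Fintype.card ι * exp (t * a) :=
    calc ∫ ω, exp (t * G ω) ∂μ ≤ ∫ ω, ∑ f, (exp (t * Y f ω) + exp (-t * Y f ω)) ∂μ :=
          integral_mono hexpG_int hsum_int fun ω ↦ exp_mul_iSup_abs_le_sum _ t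
      _ = ∑ f, (mgf (Y f) μ t + mgf (Y f) μ (-t)) := by
          rw [integral_finsetSum (f := fun f ω ↦ exp (t * Y f ω) + exp (-t * Y f ω)) _
            fun f _ ↦ (hint f t hpos).add (hint f (-t) hneg)]
          exact Finset.sum_congr rfl fun f _ ↦ integral_add (hint f t hpos) (hint f (-t) hneg)
      _ ≤ ∑ _f : ι, (exp (t * a) + exp (t * a)) :=
          Finset.sum_le_sum fun f _ ↦ add_le_add (hmgf f t hpos) (hmgf f (-t) hneg)
      _ = 2 * Fintype.card ι * exp (t * a) := by
          rw [Finset.sum_const, Finset.card_univ, nsmul_eq_mul]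
          ring
  have hlog : t * ∫ ω, G ω ∂μ ≤ log (2 * Fintype.card ι) + t * a := by
    rw [← log_exp (t * a), ← log_mul (by positivity) (exp_pos _).ne']
    exact (le_log_iff_exp_le (by positivity)).2 (hjensen.trans hunion)
  rw [← sub_le_iff_le_add', le_div_iff₀ ht]
  linarith

theorem integral_iSup_abs_sum_le {κ ι : Type*} [Fintype κ] [Fintype ι] [Nonempty ι]
    {X : κ → ι → Ω → ℝ} {M S : ℝ} (hindep : iIndepFun (fun i ω f ↦ X i f ω) μ)
    (hmeas : ∀ i f, Measurable (X i f)) (h0 : ∀ i f, μ[X i f] = 0) (hM : 0 ≤ M)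
    (hb : ∀ i f, ∀ᵐ ω ∂μ, |X i f ω| ≤ M) (hS : ∀ f, ∑ i, ∫ ω, |X i f ω| ∂μ ≤ S) :
    ∫ ω, ⨆ f, |∑ i, X i f ω| ∂μ ≤ S + M * log (2 * Fintype.card ι) := by
  have := hindep.isProbabilityMeasure
  have hint : ∀ i f, Integrable (X i f) μ := fun i f ↦
    .of_bound (hmeas i f).aestronglyMeasurable M (hb i f)
  have hindep_f : ∀ f, iIndepFun (fun i ↦ X i f) μ := fun f ↦
    hindep.comp (fun _ v ↦ v f) fun _ ↦ measurable_pi_apply f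
  rcases hM.eq_or_lt with rfl | hM
  · have hzero : ∀ᵐ ω ∂μ, ⨆ f, |∑ i, X i f ω| = 0 := by
      filter_upwards [ae_all_iff.2 fun i ↦ ae_all_iff.2 (hb i)] with ω hω
      simp [abs_nonpos_iff.1 (hω _ _)]
    obtain ⟨f⟩ := ‹Nonempty ι›
    rw [integral_congr_ae hzero, integral_zero, zero_mul, add_zero]
    exact (Finset.sum_nonneg fun i _ ↦ integral_nonneg fun ω ↦ abs_nonneg _).trans (hS f)
  have h := integral_iSup_abs_le_of_mgf_le (Y := fun f ↦ ∑ i, X i f) (inv_pos.2 hM) (a := S)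
    (fun f ↦ Finset.aemeasurable_sum _ fun i _ ↦ (hmeas i f).aemeasurable)
    (fun f s _ ↦ (hindep_f f).integrable_exp_mul_sum (fun i ↦ hmeas i f) fun i _ ↦
      integrable_exp_mul_of_mem_Icc (hmeas i f).aemeasurable
        ((hb i f).mono fun ω hω ↦ abs_le.1 hω))
    fun f s hs ↦ by
      have hsM : |s| * M = 1 := by rw [hs, inv_mul_cancel₀ hM.ne']
      have hs2 : s ^ 2 * M = M⁻¹ := by
        rw [← sq_abs, hs]
        field_simp
      calc mgf (∑ i, X i f) μ s ≤ exp (s ^ 2 * M * ∑ i, ∫ ω, |X i f ω| ∂μ) :=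
            (hindep_f f).mgf_sum_le_exp_of_abs_le (hint · f) (h0 · f) (hb · f) hsM.le
        _ ≤ exp (M⁻¹ * S) := by
            rw [hs2]
            gcongr
            exact hS f
  simpa only [Finset.sum_apply, div_inv_eq_mul, mul_comm (log _)] using h

end ProbabilityTheory

/-- **Lemma A.3 (Maximal Bernstein inequality in first-moment form).**
There is a universal constant `c > 0` such that for any finite index set `F` and random
vectors `(Q_i(f))_{f∈F}`, `i = 1,…,m`, independent across `i`, centered, with
`(1/m) Σ_i E|Q_i(f)| ≤ σ_Q` and `|Q_i(f)| ≤ M_Q` a.s., one has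
`E[max_f |(1/m) Σ_i Q_i(f)|] ≤ c (σ_Q + M_Q H / m)` where `H = 1 ∨ log |F|`. -/
theorem maximal_bernstein_first_moment :
    ∃ c : ℝ, 0 < c ∧
      ∀ (Ω : Type) (_ : MeasurableSpace Ω) (μ : Measure Ω), IsProbabilityMeasure μ →
      ∀ (ι : Type) (_ : Fintype ι) (_ : Nonempty ι)
        (m : ℕ), 0 < m →
      ∀ (Q : ℕ → ι → Ω → ℝ),
        (∀ i ∈ Finset.Icc 1 m, ∀ f, Measurable (Q i f)) →
        -- the vectors `(Q_i(f))_{f∈F}`, `i = 1,…,m`, are independent across `i`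
        iIndepFun
          (fun i : Finset.Icc 1 m => fun ω => fun f => Q (i : ℕ) f ω) μ →
        (∀ i ∈ Finset.Icc 1 m, ∀ f, Integrable (Q i f) μ) →
        -- `E Q_i(f) = 0`
        (∀ i ∈ Finset.Icc 1 m, ∀ f, ∫ ω, Q i f ω ∂μ = 0) →
      ∀ (σQ MQ : ℝ),
        -- `(1/m) Σ_{i=1}^m E|Q_i(f)| ≤ σ_Q` for every `f`
        (∀ f, ((m : ℝ))⁻¹ * ∑ i ∈ Finset.Icc 1 m, ∫ ω, |Q i f ω| ∂μ ≤ σQ) →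
        -- `|Q_i(f)| ≤ M_Q` almost surely
        (∀ i ∈ Finset.Icc 1 m, ∀ f, ∀ᵐ ω ∂μ, |Q i f ω| ≤ MQ) →
        ∫ ω, (⨆ f : ι, |((m : ℝ))⁻¹ * ∑ i ∈ Finset.Icc 1 m, Q i f ω|) ∂μ ≤
          c * (σQ + MQ * max 1 (Real.log (Fintype.card ι)) / m) := by
  refine ⟨2, two_pos, ?_⟩
  intro Ω _ μ _ ι _ _ m hm Q hmeas hindep _ hzero σQ MQ hσ hMQ
  have hm' : (0 : ℝ) < m := Nat.cast_pos.2 hm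
  have hS : ∀ f, ∑ i : Finset.Icc 1 m, ∫ ω, |Q i f ω| ∂μ ≤ m * σQ := fun f ↦ by
    rw [Finset.sum_coe_sort (Finset.Icc 1 m) fun i ↦ ∫ ω, |Q i f ω| ∂μ]
    exact (inv_mul_le_iff₀ hm').1 (hσ f)
  have hσ0 : 0 ≤ σQ := (mul_nonneg (inv_nonneg.2 hm'.le) (Finset.sum_nonneg fun i _ ↦
    integral_nonneg fun ω ↦ abs_nonneg _)).trans (hσ (Classical.arbitrary ι))
  have hMQ0 : 0 ≤ MQ :=
    let ⟨_, hω⟩ := (hMQ 1 (Finset.mem_Icc.2 ⟨le_rfl, hm⟩) (Classical.arbitrary ι)).exists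
    (abs_nonneg _).trans hω
  have hbound := integral_iSup_abs_sum_le (X := fun (i : Finset.Icc 1 m) f ↦ Q i f) hindep
    (fun i f ↦ hmeas i i.2 f) (fun i f ↦ hzero i i.2 f) hMQ0 (fun i f ↦ hMQ i i.2 f) hS
  have hscale : ∀ ω, ⨆ f, |(m : ℝ)⁻¹ * ∑ i ∈ Finset.Icc 1 m, Q i f ω| =
      (m : ℝ)⁻¹ * ⨆ f, |∑ i : Finset.Icc 1 m, Q i f ω| := fun ω ↦ by
    rw [Real.mul_iSup_of_nonneg (inv_nonneg.2 hm'.le)]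
    refine iSup_congr fun f ↦ ?_
    rw [abs_mul, abs_inv, Nat.abs_cast, Finset.sum_coe_sort (Finset.Icc 1 m) fun i ↦ Q i f ω]
  have hlog := log_two_mul_le_two_mul_max_one_log (Nat.cast_pos.2 (Fintype.card_pos (α := ι)))
  simp_rw [hscale, integral_const_mul]
  calc (m : ℝ)⁻¹ * ∫ ω, ⨆ f, |∑ i : Finset.Icc 1 m, Q i f ω| ∂μ
      ≤ (m : ℝ)⁻¹ * (m * σQ + MQ * (2 * max 1 (Real.log (Fintype.card ι)))) := by
        gcongr
        exact hbound.trans (by gcongr)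
    _ = σQ + 2 * (MQ * max 1 (Real.log (Fintype.card ι)) / m) := by field_simp
    _ ≤ 2 * (σQ + MQ * max 1 (Real.log (Fintype.card ι)) / m) := by linarith
end

section
/- Lemma A.4 (Maximal inequality for martingale empirical processes via Freedman/Pinelis): Let F be a finite class of measurable functions f : (ℝ^d)^{ℕ₀} × [0,1] → ℝ with sup_{f∈F} ‖f‖_∞ ≤ M. Then for every R > 0 there is a universal constant c > 0 such that E[ max_{f∈F} |G_n^{(1)}(f)| · 1{R_n(f)² ≤ R²} ] ≤ c { R √H + M H / √n }, where H = 1 ∨ log|F|. -/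
open Filter Set
open scoped ENNReal NNReal Topology

section
open MeasureTheory

/-- The martingale part of the empirical process,
`G_n^{(1)}(f) = n^{-1/2} Σ_{i=1}^n {f(Z_i, i/n) - E[f(Z_i, i/n) | G_{i-1}]}`. -/
noncomputable def Gn1f {Ω : Type*} [MeasurableSpace Ω] (μ : Measure Ω) (n : ℕ)
    (G : ℕ → MeasurableSpace Ω) {d : ℕ} (Z : ℕ → Ω → (ℕ → Fin d → ℝ))
    (g : (ℕ → Fin d → ℝ) → ℝ → ℝ) : Ω → ℝ := fun ω =>
  (Real.sqrt n)⁻¹ * ∑ i ∈ Finset.Icc 1 n,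
    (g (Z i ω) ((i : ℝ) / n) - (μ[(fun ω' => g (Z i ω') ((i : ℝ) / n)) | G (i - 1)]) ω)

/-- The conditional variance `R_n(f)² = (1/n) Σ_{i=1}^n E[f(Z_i, i/n)² | G_{i-1}]`. -/
noncomputable def Rn2f {Ω : Type*} [MeasurableSpace Ω] (μ : Measure Ω) (n : ℕ)
    (G : ℕ → MeasurableSpace Ω) {d : ℕ} (Z : ℕ → Ω → (ℕ → Fin d → ℝ))
    (g : (ℕ → Fin d → ℝ) → ℝ → ℝ) : Ω → ℝ := fun ω =>
  ((n : ℝ))⁻¹ * ∑ i ∈ Finset.Icc 1 n,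
    (μ[(fun ω' => (g (Z i ω') ((i : ℝ) / n))^2) | G (i - 1)]) ω

/-!
Fix `f` and write `h_i = f (Z_i, i/n)`, `S_k = Σ_{i ≤ k} (h_i - E[h_i | G_{i-1}])` and
`W_k = Σ_{i ≤ k} E[h_i² | G_{i-1}]`. Since `e^x ≤ 1 + x + x²` for `|x| ≤ 1`, a conditional
Bennett bound makes `exp (λ S_k - λ² W_k)` a supermartingale whenever `2 M |λ| ≤ 1`. On the event
`R_n(f)² ≤ R²` the compensator `λ² W_n` is at most `t² R²` for `λ = ± t / √n`, hence
`E exp (t |G_n^{(1)}(f)| 1{R_n(f)² ≤ R²}) ≤ 1 + 2 e^{t² R²}`. Jensen's inequality for `exp` and a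
union bound inside the expectation give `E max_f ≤ t⁻¹ log (|F| (1 + 2 e^{t² R²}))`, and the choice
`t⁻¹ = R / √H + 2 M / √n` balances the two terms.
-/

open ProbabilityTheory Real Finset

section Freedman

variable {Ω : Type*} {m0 : MeasurableSpace Ω} {μ : Measure Ω}

lemma abs_mul_sub_condExp_le_one {m : MeasurableSpace Ω} {X : Ω → ℝ} {M l : ℝ}
    (hXM : ∀ᵐ ω ∂μ, |X ω| ≤ M) (hl : 2 * M * |l| ≤ 1) :
    ∀ᵐ ω ∂μ, |l * (X ω - μ[X | m] ω)| ≤ 1 := by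
  filter_upwards [hXM, ae_bdd_abs_condExp_of_ae_bdd_abs (m := m) hXM] with ω hX hcond
  calc |l * (X ω - μ[X | m] ω)| ≤ |l| * (|X ω| + |μ[X | m] ω|) := by
        rw [abs_mul]; gcongr; exact abs_sub _ _
    _ ≤ 2 * M * |l| := by nlinarith [abs_nonneg l]
    _ ≤ 1 := hl

lemma integrable_exp_mul_sub_condExp [IsFiniteMeasure μ] {X : Ω → ℝ}
    (hX : AEStronglyMeasurable X μ) {M l : ℝ} (hXM : ∀ᵐ ω ∂μ, |X ω| ≤ M) (hl : 2 * M * |l| ≤ 1)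
    {m : MeasurableSpace Ω} :
    Integrable (fun ω => exp (l * (X ω - μ[X | m] ω))) μ :=
  .of_bound (continuous_exp.comp_aestronglyMeasurable
      ((hX.sub integrable_condExp.aestronglyMeasurable).const_mul l)) (exp 1) (by
    filter_upwards [abs_mul_sub_condExp_le_one hXM hl] with ω hω
    rw [Real.norm_eq_abs, abs_of_pos (exp_pos _)]
    exact exp_le_exp.2 ((le_abs_self _).trans hω))

lemma condExp_exp_mul_sub_condExp_le [IsFiniteMeasure μ] {X : Ω → ℝ}
    (hX : AEStronglyMeasurable X μ) {M l : ℝ} (hXM : ∀ᵐ ω ∂μ, |X ω| ≤ M) (hl : 2 * M * |l| ≤ 1)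
    {m : MeasurableSpace Ω} (hm : m ≤ m0) :
    μ[fun ω => exp (l * (X ω - μ[X | m] ω)) | m]
      ≤ᵐ[μ] fun ω => exp (l ^ 2 * μ[fun ω => X ω ^ 2 | m] ω) := by
  set D : Ω → ℝ := X - μ[X | m] with hD
  have hX2 : MemLp X 2 μ := .of_bound hX M (by simpa only [Real.norm_eq_abs] using hXM)
  have hD2 : MemLp D 2 μ := hX2.sub (hX2.condExp one_le_two)
  have hD_int : Integrable D μ := hD2.integrable one_le_two
  have hD2_int : Integrable (D ^ 2) μ := hD2.integrable_sq
  have hlD := abs_mul_sub_condExp_le_one (m := m) hXM hl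
  have hexp_int : Integrable (fun ω => exp (l * D ω)) μ :=
    integrable_exp_mul_sub_condExp hX hXM hl
  have hquad_int : Integrable (1 + l • D + l ^ 2 • D ^ 2) μ :=
    ((integrable_const 1).add (hD_int.smul l)).add (hD2_int.smul _)
  have hexp_le : (fun ω => exp (l * D ω)) ≤ᵐ[μ] 1 + l • D + l ^ 2 • D ^ 2 := by
    filter_upwards [hlD] with ω hω
    have := abs_le.1 (abs_exp_sub_one_sub_id_le hω)
    simp only [hD, Pi.add_apply, Pi.smul_apply, Pi.pow_apply, Pi.sub_apply, smul_eq_mul,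
      Pi.one_apply] at this ⊢
    linarith [this.2]
  have hmean : μ[D | m] =ᵐ[μ] 0 := by
    filter_upwards [condExp_sub (m := m) (hX2.integrable one_le_two) integrable_condExp,
      condExp_condExp_of_le (f := X) (μ := μ) le_rfl hm] with ω h1 h2
    rw [hD, h1, Pi.sub_apply, h2, sub_self, Pi.zero_apply]
  have hquad : μ[1 + l • D + l ^ 2 • D ^ 2 | m]
      =ᵐ[μ] fun ω => 1 + l * μ[D | m] ω + l ^ 2 * Var[X; μ | m] ω := by
    filter_upwards [condExp_add (f := 1 + l • D) ((integrable_const 1).add (hD_int.smul l))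
        (hD2_int.smul (l ^ 2)) m, condExp_add (f := 1) (integrable_const 1) (hD_int.smul l) m,
      condExp_smul (μ := μ) l D m, condExp_smul (μ := μ) (l ^ 2) (D ^ 2) m] with ω h1 h2 h3 h4
    have h0 : μ[(1 : Ω → ℝ) | m] = 1 := condExp_const hm (1 : ℝ)
    rw [h1, Pi.add_apply, h2, Pi.add_apply, h3, h4, h0]
    simp [condVar, hD]
  filter_upwards [condExp_mono (m := m) hexp_int hquad_int hexp_le, hquad, hmean,
    condVar_ae_le_condExp_sq hm hX2] with ω h1 h2 h3 h4
  rw [h2, h3, Pi.zero_apply, mul_zero, add_zero] at h1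
  calc μ[fun ω => exp (l * (X ω - μ[X | m] ω)) | m] ω ≤ 1 + l ^ 2 * Var[X; μ | m] ω := h1
    _ ≤ 1 + l ^ 2 * μ[fun ω => X ω ^ 2 | m] ω := by gcongr; exact h4
    _ ≤ exp (l ^ 2 * μ[fun ω => X ω ^ 2 | m] ω) := by
      linarith [add_one_le_exp (l ^ 2 * μ[fun ω => X ω ^ 2 | m] ω)]

variable (μ) in
noncomputable def martingaleSum (G : ℕ → MeasurableSpace Ω) (h : ℕ → Ω → ℝ) (k : ℕ) : Ω → ℝ :=
  fun ω => ∑ i ∈ Icc 1 k, (h i ω - μ[h i | G (i - 1)] ω)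

variable (μ) in
noncomputable def condSqSum (G : ℕ → MeasurableSpace Ω) (h : ℕ → Ω → ℝ) (k : ℕ) : Ω → ℝ :=
  fun ω => ∑ i ∈ Icc 1 k, μ[fun ω => h i ω ^ 2 | G (i - 1)] ω

variable (μ) in
noncomputable def freedmanExp (G : ℕ → MeasurableSpace Ω) (h : ℕ → Ω → ℝ) (l : ℝ) (k : ℕ) :
    Ω → ℝ :=
  fun ω => exp (l * martingaleSum μ G h k ω - l ^ 2 * condSqSum μ G h k ω)

-- For `h i = f (Z i) (i / n)` this is `|G_n^{(1)}(f)| · 1{R_n(f)² ≤ r}`.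
variable (μ) in
noncomputable def cutoffMartingaleSum (G : ℕ → MeasurableSpace Ω) (h : ℕ → Ω → ℝ) (n : ℕ)
    (r : ℝ) : Ω → ℝ :=
  {ω | (n : ℝ)⁻¹ * condSqSum μ G h n ω ≤ r}.indicator
    fun ω => |(√n)⁻¹ * martingaleSum μ G h n ω|

variable {G : ℕ → MeasurableSpace Ω} {h : ℕ → Ω → ℝ} {M l : ℝ}

lemma freedmanExp_zero : freedmanExp μ G h l 0 = 1 := by
  ext ω; simp [freedmanExp, martingaleSum, condSqSum]

lemma freedmanExp_succ (k : ℕ) (ω : Ω) :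
    freedmanExp μ G h l (k + 1) ω = freedmanExp μ G h l k ω
      * exp (-(l ^ 2 * μ[fun ω => h (k + 1) ω ^ 2 | G k] ω))
      * exp (l * (h (k + 1) ω - μ[h (k + 1) | G k] ω)) := by
  simp only [freedmanExp, martingaleSum, condSqSum, ← exp_add,
    sum_Icc_succ_top (Nat.le_add_left 1 k), Nat.add_sub_cancel]
  ring_nf

lemma freedmanExp_le (hM : ∀ i, ∀ᵐ ω ∂μ, |h i ω| ≤ M) (hl : 2 * M * |l| ≤ 1) (k : ℕ) :
    ∀ᵐ ω ∂μ, freedmanExp μ G h l k ω ≤ exp k := by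
  have hinc : ∀ᵐ ω ∂μ, ∀ i, |l * (h i ω - μ[h i | G (i - 1)] ω)| ≤ 1 :=
    ae_all_iff.2 fun i => abs_mul_sub_condExp_le_one (hM i) hl
  have hsq : ∀ᵐ ω ∂μ, ∀ i, 0 ≤ μ[fun ω => h i ω ^ 2 | G (i - 1)] ω :=
    ae_all_iff.2 fun i => condExp_nonneg (ae_of_all _ fun ω => sq_nonneg _)
  filter_upwards [hinc, hsq] with ω hinc hsq
  have hS : l * martingaleSum μ G h k ω ≤ k := by
    rw [martingaleSum, mul_sum]
    calc ∑ i ∈ Icc 1 k, l * (h i ω - μ[h i | G (i - 1)] ω) ≤ ∑ _i ∈ Icc 1 k, (1 : ℝ) :=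
          sum_le_sum fun i _ => (le_abs_self _).trans (hinc i)
      _ = k := by simp
  have hW : 0 ≤ condSqSum μ G h k ω := sum_nonneg fun i _ => hsq i
  exact exp_le_exp.2 (by nlinarith [sq_nonneg l])

lemma exp_mul_cutoffMartingaleSum_le (n : ℕ) (t r : ℝ) (ω : Ω) :
    exp (t * cutoffMartingaleSum μ G h n r ω) ≤
      1 + exp (t ^ 2 * r) *
        (freedmanExp μ G h (t / √n) n ω + freedmanExp μ G h (-(t / √n)) n ω) := by
  set S := martingaleSum μ G h n ω
  set W := condSqSum μ G h n ω
  have hE : 0 ≤ exp (t ^ 2 * r) * (freedmanExp μ G h (t / √n) n ω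
      + freedmanExp μ G h (-(t / √n)) n ω) := by unfold freedmanExp; positivity
  by_cases hω : ω ∈ {ω | (n : ℝ)⁻¹ * condSqSum μ G h n ω ≤ r}
  swap
  · rw [cutoffMartingaleSum, indicator_of_notMem hω, mul_zero, exp_zero]
    linarith
  rw [cutoffMartingaleSum, indicator_of_mem hω]
  have hW : (t / √n) ^ 2 * W ≤ t ^ 2 * r := by
    rw [div_pow, sq_sqrt n.cast_nonneg, div_eq_mul_inv, mul_assoc]
    exact mul_le_mul_of_nonneg_left hω (sq_nonneg t)
  have hsplit : ∀ l : ℝ, l ^ 2 = (t / √n) ^ 2 →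
      exp (l * S) ≤ exp (t ^ 2 * r) * freedmanExp μ G h l n ω := by
    intro l hl
    rw [freedmanExp, ← exp_add, exp_le_exp, hl]
    linarith
  calc exp (t * |(√n)⁻¹ * S|) ≤ exp |t / √n * S| := by
        rw [exp_le_exp, div_eq_mul_inv, mul_assoc, abs_mul t]
        exact mul_le_mul_of_nonneg_right (le_abs_self t) (abs_nonneg _)
    _ ≤ exp (t / √n * S) + exp (-(t / √n) * S) := by rw [neg_mul]; exact exp_abs_le _
    _ ≤ _ := by linarith [hsplit _ rfl, hsplit (-(t / √n)) (neg_sq _)]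

section Filtration

variable {ℱ : Filtration ℕ m0}

lemma measurable_martingaleSum (hh : StronglyAdapted ℱ h) (k : ℕ) :
    Measurable[ℱ k] (martingaleSum μ ℱ h k) :=
  Finset.measurable_sum _ fun i hi =>
    ((hh i).measurable.mono (ℱ.mono (mem_Icc.1 hi).2) le_rfl).sub
      (stronglyMeasurable_condExp.measurable.mono (ℱ.mono (by grind)) le_rfl)

lemma measurable_condSqSum (k : ℕ) : Measurable[ℱ k] (condSqSum μ ℱ h k) :=
  Finset.measurable_sum _ fun i hi =>
    stronglyMeasurable_condExp.measurable.mono (ℱ.mono (by grind)) le_rfl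

lemma stronglyAdapted_freedmanExp (hh : StronglyAdapted ℱ h) :
    StronglyAdapted ℱ (freedmanExp μ ℱ h l) := fun k =>
  (((measurable_martingaleSum hh k).const_mul l).sub
    ((measurable_condSqSum k).const_mul _)).exp.stronglyMeasurable

section FiniteMeasure

variable [IsFiniteMeasure μ]

lemma integrable_freedmanExp (hh : StronglyAdapted ℱ h) (hM : ∀ i, ∀ᵐ ω ∂μ, |h i ω| ≤ M)
    (hl : 2 * M * |l| ≤ 1) (k : ℕ) : Integrable (freedmanExp μ ℱ h l k) μ :=
  .of_bound ((stronglyAdapted_freedmanExp hh k).mono (ℱ.le k)).aestronglyMeasurable (exp k) (by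
    filter_upwards [freedmanExp_le (G := ℱ) hM hl k] with ω hω
    exact (abs_of_pos (exp_pos _)).trans_le hω)

theorem supermartingale_freedmanExp (hh : StronglyAdapted ℱ h)
    (hM : ∀ i, ∀ᵐ ω ∂μ, |h i ω| ≤ M) (hl : 2 * M * |l| ≤ 1) :
    Supermartingale (freedmanExp μ ℱ h l) ℱ μ := by
  refine supermartingale_nat (stronglyAdapted_freedmanExp hh) (integrable_freedmanExp hh hM hl)
    fun k => ?_
  set q := μ[fun ω => h (k + 1) ω ^ 2 | ℱ k]
  set P : Ω → ℝ := fun ω => freedmanExp μ ℱ h l k ω * exp (-(l ^ 2 * q ω))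
  set B : Ω → ℝ := fun ω => exp (l * (h (k + 1) ω - μ[h (k + 1) | ℱ k] ω))
  have hP : StronglyMeasurable[ℱ k] P := ((stronglyAdapted_freedmanExp hh k).measurable.mul
    (stronglyMeasurable_condExp.measurable.const_mul _).neg.exp).stronglyMeasurable
  have hPB : freedmanExp μ ℱ h l (k + 1) = P * B := funext (freedmanExp_succ k)
  have hh_meas : AEStronglyMeasurable (h (k + 1)) μ :=
    ((hh (k + 1)).mono (ℱ.le _)).aestronglyMeasurable
  have hB : Integrable B μ := integrable_exp_mul_sub_condExp hh_meas (hM (k + 1)) hl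
  rw [hPB]
  filter_upwards [condExp_mul_of_stronglyMeasurable_left hP
      (hPB ▸ integrable_freedmanExp hh hM hl (k + 1)) hB,
    condExp_exp_mul_sub_condExp_le hh_meas (hM (k + 1)) hl (ℱ.le k)] with ω hpull hB_le
  calc μ[P * B | ℱ k] ω = P ω * μ[B | ℱ k] ω := hpull
    _ ≤ P ω * exp (l ^ 2 * q ω) :=
      mul_le_mul_of_nonneg_left hB_le (mul_nonneg (exp_pos _).le (exp_pos _).le)
    _ = freedmanExp μ ℱ h l k ω := by
      simp only [P, mul_assoc, ← exp_add, neg_add_cancel, exp_zero, mul_one]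

end FiniteMeasure

theorem integral_freedmanExp_le_one [IsProbabilityMeasure μ] (hh : StronglyAdapted ℱ h)
    (hM : ∀ i, ∀ᵐ ω ∂μ, |h i ω| ≤ M) (hl : 2 * M * |l| ≤ 1) (n : ℕ) :
    ∫ ω, freedmanExp μ ℱ h l n ω ∂μ ≤ 1 := by
  simpa [freedmanExp_zero] using
    (supermartingale_freedmanExp hh hM hl).setIntegral_le (Nat.zero_le n) MeasurableSet.univ

lemma measurable_cutoffMartingaleSum (hh : StronglyAdapted ℱ h) (n : ℕ) (r : ℝ) :
    Measurable (cutoffMartingaleSum μ ℱ h n r) :=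
  (((measurable_martingaleSum hh n).mono (ℱ.le n) le_rfl).const_mul _).abs.indicator
    (measurableSet_le (((measurable_condSqSum n).mono (ℱ.le n) le_rfl).const_mul _)
      measurable_const)

theorem integral_exp_mul_cutoffMartingaleSum_le [IsProbabilityMeasure μ]
    (hh : StronglyAdapted ℱ h) (hM : ∀ i, ∀ᵐ ω ∂μ, |h i ω| ≤ M) {n : ℕ} {t : ℝ}
    (ht : 2 * M * |t| ≤ √n) (r : ℝ) :
    Integrable (fun ω => exp (t * cutoffMartingaleSum μ ℱ h n r ω)) μ ∧
      ∫ ω, exp (t * cutoffMartingaleSum μ ℱ h n r ω) ∂μ ≤ 1 + 2 * exp (t ^ 2 * r) := by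
  have hl : ∀ l : ℝ, |l| = |t / √n| → 2 * M * |l| ≤ 1 := by
    intro l hl
    rw [hl, abs_div, abs_of_nonneg (sqrt_nonneg _), ← mul_div_assoc]
    exact div_le_one_of_le₀ ht (sqrt_nonneg _)
  have hEpos := integrable_freedmanExp hh hM (hl _ rfl) n
  have hEneg := integrable_freedmanExp hh hM (hl _ (abs_neg _)) n
  have hbound_int := (integrable_const 1).add ((hEpos.add hEneg).const_mul (exp (t ^ 2 * r)))
  have hint : Integrable (fun ω => exp (t * cutoffMartingaleSum μ ℱ h n r ω)) μ :=
    hbound_int.mono'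
      ((measurable_cutoffMartingaleSum hh n r).const_mul t).exp.aestronglyMeasurable
      (ae_of_all _ fun ω => by
        rw [Real.norm_eq_abs, abs_of_pos (exp_pos _)]
        exact exp_mul_cutoffMartingaleSum_le n t r ω)
  refine ⟨hint, ?_⟩
  calc ∫ ω, exp (t * cutoffMartingaleSum μ ℱ h n r ω) ∂μ
      ≤ ∫ ω, (1 + exp (t ^ 2 * r) * (freedmanExp μ ℱ h (t / √n) n ω
          + freedmanExp μ ℱ h (-(t / √n)) n ω)) ∂μ :=
        integral_mono hint hbound_int fun ω => exp_mul_cutoffMartingaleSum_le n t r ω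
    _ = 1 + exp (t ^ 2 * r) * (∫ ω, freedmanExp μ ℱ h (t / √n) n ω ∂μ
          + ∫ ω, freedmanExp μ ℱ h (-(t / √n)) n ω ∂μ) := by
        rw [integral_add (integrable_const 1) (by exact (hEpos.add hEneg).const_mul _),
          integral_const_mul, integral_add hEpos hEneg]
        simp
    _ ≤ 1 + exp (t ^ 2 * r) * (1 + 1) := by
        gcongr
        · exact integral_freedmanExp_le_one hh hM (hl _ rfl) n
        · exact integral_freedmanExp_le_one hh hM (hl _ (abs_neg _)) n
    _ = 1 + 2 * exp (t ^ 2 * r) := by ring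

end Filtration

end Freedman

section Maximal
variable {Ω : Type*} {m0 : MeasurableSpace Ω} {μ : Measure Ω}

theorem integral_iSup_le_inv_mul_log [IsProbabilityMeasure μ] {ι : Type*} [Fintype ι]
    [Nonempty ι] {X : ι → Ω → ℝ} {t B : ℝ} (ht : 0 < t) (hX0 : ∀ j ω, 0 ≤ X j ω)
    (hX : ∀ j, Measurable (X j)) (hexp : ∀ j, Integrable (fun ω => exp (t * X j ω)) μ)
    (hB : ∀ j, ∫ ω, exp (t * X j ω) ∂μ ≤ B) :
    ∫ ω, ⨆ j, X j ω ∂μ ≤ t⁻¹ * log (Fintype.card ι * B) := by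
  have hsum_int : Integrable (fun ω => ∑ j, exp (t * X j ω)) μ :=
    integrable_finsetSum _ fun j _ => hexp j
  have hmax_le : ∀ ω, exp (t * ⨆ j, X j ω) ≤ ∑ j, exp (t * X j ω) := fun ω => by
    obtain ⟨j, hj⟩ := exists_eq_ciSup_of_finite (f := fun j => X j ω)
    rw [← hj]
    exact single_le_sum (f := fun j => exp (t * X j ω)) (fun j _ => (exp_pos _).le) (mem_univ j)
  have hmax_meas : Measurable fun ω => ⨆ j, X j ω := Measurable.iSup hX
  have hmax_int : Integrable (fun ω => ⨆ j, X j ω) μ :=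
    (hsum_int.div_const t).mono' hmax_meas.aestronglyMeasurable (ae_of_all _ fun ω => by
      obtain ⟨j₀⟩ := ‹Nonempty ι›
      have hmax0 : 0 ≤ ⨆ j, X j ω :=
        (hX0 j₀ ω).trans (le_ciSup (f := fun j => X j ω) (Finite.bddAbove_range _) j₀)
      rw [Real.norm_eq_abs, abs_of_nonneg hmax0, le_div_iff₀ ht, mul_comm]
      linarith [add_one_le_exp (t * ⨆ j, X j ω), hmax_le ω])
  have hexp_max_int : Integrable (fun ω => exp (t * ⨆ j, X j ω)) μ :=
    hsum_int.mono' (hmax_meas.const_mul t).exp.aestronglyMeasurable (ae_of_all _ fun ω => by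
      rw [Real.norm_eq_abs, abs_of_pos (exp_pos _)]
      exact hmax_le ω)
  have hjensen : exp (t * ∫ ω, ⨆ j, X j ω ∂μ) ≤ Fintype.card ι * B :=
    calc exp (t * ∫ ω, ⨆ j, X j ω ∂μ) ≤ ∫ ω, exp (t * ⨆ j, X j ω) ∂μ := by
          rw [← integral_const_mul]
          exact convexOn_exp.map_integral_le continuousOn_exp isClosed_univ
            (ae_of_all _ fun _ => mem_univ _) (hmax_int.const_mul t) hexp_max_int
      _ ≤ ∫ ω, ∑ j, exp (t * X j ω) ∂μ := integral_mono hexp_max_int hsum_int hmax_le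
      _ = ∑ j, ∫ ω, exp (t * X j ω) ∂μ := integral_finsetSum _ fun j _ => hexp j
      _ ≤ ∑ _j : ι, B := sum_le_sum fun j _ => hB j
      _ = Fintype.card ι * B := by simp
  rw [le_inv_mul_iff₀ ht, le_log_iff_exp_le ((exp_pos _).trans_le hjensen)]
  exact hjensen

end Maximal

lemma two_mul_mul_inv_add_le {a M s : ℝ} (ha : 0 < a) (hM : 0 ≤ M) (hs : 0 < s) :
    2 * M * |(a + 2 * M / s)⁻¹| ≤ s := by
  have hpos : 0 < a + 2 * M / s := by positivity
  rw [abs_of_pos (inv_pos.2 hpos), ← div_eq_mul_inv, div_le_iff₀ hpos, mul_add,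
    mul_div_cancel₀ _ hs.ne']
  linarith [mul_pos hs ha]

lemma inv_mul_log_mul_one_add_two_exp_le {K : ℕ} (hK : 0 < K) {R M H s t : ℝ} (hR : 0 < R)
    (hM : 0 ≤ M) (hH : 1 ≤ H) (hKH : log K ≤ H) (hs : 0 < s) (ht : t = (R / √H + 2 * M / s)⁻¹) :
    t⁻¹ * log (K * (1 + 2 * exp (t ^ 2 * R ^ 2))) ≤ 6 * (R * √H + M * H / s) := by
  have hsH : 0 < √H := sqrt_pos.2 (by linarith)
  have ha : 0 < R / √H := div_pos hR hsH
  have hb : 0 ≤ 2 * M / s := by positivity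
  have ht0 : 0 < t := by rw [ht]; positivity
  have htR : t * R ≤ √H := by
    have : t ≤ (R / √H)⁻¹ := ht ▸ inv_anti₀ ha (le_add_of_nonneg_right hb)
    rwa [inv_div, le_div_iff₀ hR] at this
  have hlog3 : log 3 ≤ 2 := by linarith [log_le_sub_one_of_pos (show (0 : ℝ) < 3 by norm_num)]
  have hlog : log (K * (1 + 2 * exp (t ^ 2 * R ^ 2))) ≤ 3 * H + t ^ 2 * R ^ 2 := by
    have h3 : 1 + 2 * exp (t ^ 2 * R ^ 2) ≤ 3 * exp (t ^ 2 * R ^ 2) := by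
      linarith [one_le_exp (by positivity : 0 ≤ t ^ 2 * R ^ 2)]
    rw [log_mul (by positivity) (by positivity)]
    have := log_le_log (by positivity) h3
    rw [log_mul (by norm_num) (exp_pos _).ne', log_exp] at this
    linarith
  calc t⁻¹ * log (K * (1 + 2 * exp (t ^ 2 * R ^ 2))) ≤ t⁻¹ * (3 * H + t ^ 2 * R ^ 2) := by
        gcongr
    _ = 3 * R * (H / √H) + 6 * (M * H / s) + t * R * R := by
        rw [ht, inv_inv]; field_simp; ring
    _ ≤ 6 * (R * √H + M * H / s) := by
        rw [div_sqrt]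
        nlinarith [mul_le_mul_of_nonneg_right htR hR.le, mul_pos hR hsH]

/-- **Lemma A.4 (Maximal inequality for martingale empirical processes via
Freedman/Pinelis).** -/
theorem maximal_inequality_martingale :
    ∃ c : ℝ, 0 < c ∧
      ∀ (Ω : Type) (_ : MeasurableSpace Ω) (μ : Measure Ω), IsProbabilityMeasure μ →
      ∀ (d n : ℕ), 0 < n →
      -- a filtration `(G_i)` …
      ∀ (G : ℕ → MeasurableSpace Ω), (∀ i, G i ≤ ‹MeasurableSpace Ω›) → Monotone G →
      -- … to which the `Z_i` are adapted
      ∀ (Z : ℕ → Ω → (ℕ → Fin d → ℝ)), (∀ i, Measurable[G i] (Z i)) →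
      -- a finite class `F` of measurable functions with `sup_{f∈F} ‖f‖_∞ ≤ M`
      ∀ (ι : Type) (_ : Fintype ι) (_ : Nonempty ι)
        (f : ι → (ℕ → Fin d → ℝ) → ℝ → ℝ),
        (∀ j, Measurable (Function.uncurry (f j))) →
      ∀ (M : ℝ), (∀ j z u, |f j z u| ≤ M) →
      ∀ (R : ℝ), 0 < R →
        ∫ ω, (⨆ j : ι,
            Set.indicator {ω' | Rn2f μ n G Z (f j) ω' ≤ R^2}
              (fun ω' => |Gn1f μ n G Z (f j) ω'|) ω) ∂μ ≤
          c * (R * Real.sqrt (max 1 (Real.log (Fintype.card ι)))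
            + M * max 1 (Real.log (Fintype.card ι)) / Real.sqrt n) := by
  refine ⟨6, by norm_num, ?_⟩
  intro Ω _ μ _ d n hn G hGle hGm Z hZ ι _ _ f hf M hfM R hR
  obtain ⟨j₀⟩ := ‹Nonempty ι›
  have hM : 0 ≤ M := (abs_nonneg _).trans (hfM j₀ (fun _ _ => 0) 0)
  have hsn : 0 < √(n : ℝ) := sqrt_pos.2 (by exact_mod_cast hn)
  set H := max 1 (log (Fintype.card ι))
  set t := (R / √H + 2 * M / √n)⁻¹ with ht
  have htM : 2 * M * |t| ≤ √n := two_mul_mul_inv_add_le (by positivity) hM hsn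
  let ℱ : Filtration ℕ _ := ⟨G, hGm, hGle⟩
  let h : ι → ℕ → Ω → ℝ := fun j i ω => f j (Z i ω) ((i : ℝ) / n)
  have hh : ∀ j, StronglyAdapted ℱ (h j) := fun j i =>
    ((hf j).comp ((hZ i).prodMk measurable_const)).stronglyMeasurable
  have hcutoff j := integral_exp_mul_cutoffMartingaleSum_le (hh j)
    (fun i => ae_of_all μ fun ω => hfM j _ _) htM (R ^ 2)
  calc _ = ∫ ω, ⨆ j, cutoffMartingaleSum μ ℱ (h j) n (R ^ 2) ω ∂μ := rfl
    _ ≤ t⁻¹ * log (Fintype.card ι * (1 + 2 * exp (t ^ 2 * R ^ 2))) :=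
      integral_iSup_le_inv_mul_log (by positivity) (fun j ω => indicator_nonneg (fun _ _ => abs_nonneg _) ω)
        (fun j => measurable_cutoffMartingaleSum (hh j) n _) (fun j => (hcutoff j).1)
        (fun j => (hcutoff j).2)
    _ ≤ 6 * (R * √H + M * H / √n) :=
      inv_mul_log_mul_one_add_two_exp_le Fintype.card_pos hR hM (le_max_left _ _)
        (le_max_right _ _) hsn ht

end
end

section
/- Integral bound for the chaining weight ψ: Define ψ(ε) = √(log(ε^{−1} ∨ 1)) · log log(ε^{−1} ∨ e) for ε > 0. Then there exists a constant c_ψ > 0 such that for every δ ∈ (0, e^{−e}], ∫₀^δ ψ(x) dx ≤ c_ψ · δ · ψ(δ). -/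
/-!
With `t = log x⁻¹`, on `(0, e^{-e}]` the weight is `ψ = √t · log t` with `t ≥ e`, and `1 + s ≤ eˢ`
gives `√(t + s) · log (t + s) ≤ √t · log t · e^{3s/4}` for `s ≥ 0`. Hence `ψ x ≤ ψ δ · (δ / x)^{3/4}`
for `x ≤ δ`, and `(δ / x)^{3/4}` integrates to `4δ` over `(0, δ)`.
-/

open Filter Set

/-- The chaining weight `ψ(ε) = √(log(ε⁻¹ ∨ 1)) · log log(ε⁻¹ ∨ e)`. -/
noncomputable def psiw (ε : ℝ) : ℝ :=
  Real.sqrt (Real.log (max ε⁻¹ 1)) * Real.log (Real.log (max ε⁻¹ (Real.exp 1)))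

open MeasureTheory Real

lemma eqOn_div_rpow {δ : ℝ} (hδ : 0 < δ) (r : ℝ) :
    EqOn (fun x ↦ (δ / x) ^ r) (fun x ↦ δ ^ r * x ^ (-r)) (Ioo 0 δ) := fun x hx ↦ by
  show (δ / x) ^ r = δ ^ r * x ^ (-r)
  rw [div_rpow hδ.le hx.1.le, rpow_neg hx.1.le, div_eq_mul_inv]

lemma setIntegral_Ioo_div_rpow {δ r : ℝ} (hδ : 0 < δ) (hr : r < 1) :
    ∫ x in Ioo 0 δ, (δ / x) ^ r = δ / (1 - r) := by
  rw [setIntegral_congr_fun measurableSet_Ioo (eqOn_div_rpow hδ r), integral_const_mul,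
    ← integral_Ioc_eq_integral_Ioo, ← intervalIntegral.integral_of_le hδ.le,
    integral_rpow (Or.inl (by linarith)), zero_rpow (by linarith), sub_zero,
    mul_div_assoc', ← rpow_add hδ, add_neg_cancel_left, rpow_one, neg_add_eq_sub]

lemma integrableOn_Ioo_div_rpow {δ r : ℝ} (hδ : 0 < δ) (hr : r < 1) :
    IntegrableOn (fun x ↦ (δ / x) ^ r) (Ioo 0 δ) := by
  have hint : IntegrableOn (fun x ↦ x ^ (-r)) (Ioo 0 δ) :=
    (intervalIntegral.integrableOn_Ioo_rpow_iff hδ).2 (by linarith)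
  exact IntegrableOn.congr_fun (hint.const_mul (δ ^ r)) (eqOn_div_rpow hδ r).symm measurableSet_Ioo

lemma setIntegral_Ioo_le_of_le_mul_div_rpow {f : ℝ → ℝ} {A δ r : ℝ} (hδ : 0 < δ) (hr : r < 1)
    (hf₀ : ∀ x ∈ Ioo 0 δ, 0 ≤ f x) (hf : ∀ x ∈ Ioo 0 δ, f x ≤ A * (δ / x) ^ r) :
    ∫ x in Ioo 0 δ, f x ≤ A * δ / (1 - r) := by
  calc ∫ x in Ioo 0 δ, f x ≤ ∫ x in Ioo 0 δ, A * (δ / x) ^ r :=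
        integral_mono_of_nonneg ((ae_restrict_iff' measurableSet_Ioo).2 (.of_forall hf₀))
          ((integrableOn_Ioo_div_rpow hδ hr).const_mul A)
          ((ae_restrict_iff' measurableSet_Ioo).2 (.of_forall hf))
    _ = A * δ / (1 - r) := by rw [integral_const_mul, setIntegral_Ioo_div_rpow hδ hr, mul_div_assoc]

lemma le_mul_exp_half_sub {L K : ℝ} (hL : 2 ≤ L) (hLK : L ≤ K) :
    K ≤ L * exp ((K - L) / 2) := by
  nlinarith [add_one_le_exp ((K - L) / 2)]

lemma sqrt_le_sqrt_mul_exp {L K : ℝ} (hL : 2 ≤ L) (hLK : L ≤ K) :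
    √K ≤ √L * exp ((K - L) / 4) := by
  calc √K ≤ √(L * exp ((K - L) / 2)) := sqrt_le_sqrt (le_mul_exp_half_sub hL hLK)
    _ = √L * exp ((K - L) / 4) := by
      rw [sqrt_mul (by linarith), sqrt_eq_rpow, sqrt_eq_rpow, ← exp_mul]
      ring_nf

lemma log_le_log_mul_exp {L K : ℝ} (hL : exp 1 ≤ L) (hLK : L ≤ K) :
    log K ≤ log L * exp ((K - L) / 2) := by
  have hL₂ : 2 ≤ L := by linarith [exp_one_gt_d9]
  have hlogL : 1 ≤ log L := by simpa using log_le_log (exp_pos 1) hL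
  calc log K ≤ log (L * exp ((K - L) / 2)) :=
        log_le_log (by linarith) (le_mul_exp_half_sub hL₂ hLK)
    _ = log L + (K - L) / 2 := by rw [log_mul (by linarith) (exp_pos _).ne', log_exp]
    _ ≤ log L * ((K - L) / 2 + 1) := by nlinarith
    _ ≤ log L * exp ((K - L) / 2) := by gcongr; exact add_one_le_exp _

lemma sqrt_mul_log_le_mul_exp {L K : ℝ} (hL : exp 1 ≤ L) (hLK : L ≤ K) :
    √K * log K ≤ √L * log L * exp (3 / 4 * (K - L)) := by
  have hL₂ : 2 ≤ L := by linarith [exp_one_gt_d9]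
  have hlogK : 0 ≤ log K := log_nonneg (by linarith)
  calc √K * log K ≤ (√L * exp ((K - L) / 4)) * (log L * exp ((K - L) / 2)) :=
        mul_le_mul (sqrt_le_sqrt_mul_exp hL₂ hLK) (log_le_log_mul_exp hL hLK) hlogK
          (by positivity)
    _ = √L * log L * exp (3 / 4 * (K - L)) := by
      rw [mul_mul_mul_comm, ← exp_add]
      ring_nf

lemma exp_one_le_log_inv {x : ℝ} (hx : 0 < x) (hxe : x ≤ exp (-exp 1)) : exp 1 ≤ log x⁻¹ := by
  rw [log_inv]
  linarith [(log_le_iff_le_exp hx).2 hxe]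

lemma psiw_eq_sqrt_mul_log {x : ℝ} (hx : 0 < x) (hxe : x ≤ exp (-exp 1)) :
    psiw x = √(log x⁻¹) * log (log x⁻¹) := by
  have hinv : exp 1 ≤ x⁻¹ := by
    linarith [exp_one_le_log_inv hx hxe, log_le_sub_one_of_pos (inv_pos.2 hx), exp_one_gt_d9]
  rw [psiw, max_eq_left (by linarith [exp_one_gt_d9]), max_eq_left hinv]

lemma psiw_nonneg (x : ℝ) : 0 ≤ psiw x :=
  mul_nonneg (sqrt_nonneg _) (log_nonneg (by simpa using log_le_log (exp_pos 1) (le_max_right _ _)))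

lemma psiw_le_mul_div_rpow {x δ : ℝ} (hx : 0 < x) (hxδ : x ≤ δ) (hδ : δ ≤ exp (-exp 1)) :
    psiw x ≤ psiw δ * (δ / x) ^ (3 / 4 : ℝ) := by
  have hδ₀ : 0 < δ := hx.trans_le hxδ
  have hlog : log δ⁻¹ ≤ log x⁻¹ := log_le_log (inv_pos.2 hδ₀) (inv_anti₀ hx hxδ)
  have hpow : (δ / x) ^ (3 / 4 : ℝ) = exp (3 / 4 * (log x⁻¹ - log δ⁻¹)) := by
    rw [rpow_def_of_pos (div_pos hδ₀ hx), log_div hδ₀.ne' hx.ne', log_inv, log_inv]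
    ring_nf
  rw [psiw_eq_sqrt_mul_log hx (hxδ.trans hδ), psiw_eq_sqrt_mul_log hδ₀ hδ, hpow]
  exact sqrt_mul_log_le_mul_exp (exp_one_le_log_inv hδ₀ hδ) hlog

/-- **Integral bound for the chaining weight `ψ`.** -/
theorem psiw_integral_bound :
    ∃ cψ : ℝ, 0 < cψ ∧
      ∀ δ : ℝ, δ ∈ Set.Ioc (0 : ℝ) (Real.exp (-(Real.exp 1))) →
        ∫ x in Set.Ioo (0 : ℝ) δ, psiw x ≤ cψ * δ * psiw δ := by
  refine ⟨4, by norm_num, fun δ ⟨hδ₀, hδ⟩ ↦ ?_⟩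
  calc ∫ x in Ioo 0 δ, psiw x ≤ psiw δ * δ / (1 - 3 / 4) :=
        setIntegral_Ioo_le_of_le_mul_div_rpow hδ₀ (by norm_num) (fun x _ ↦ psiw_nonneg x)
          fun x hx ↦ psiw_le_mul_div_rpow hx.1 hx.2.le hδ
    _ = 4 * δ * psiw δ := by ring
end

section
/- From the V-functional to the L²-norm: Let Δ : ℕ → [0,∞) be nonincreasing with Σ_{j=1}^∞ Δ(j) < ∞. Define β(q) = Σ_{j=q}^∞ Δ(j), q*(x) = min{q ∈ ℕ, q ≥ 1 : β(q) ≤ q x} for x > 0, and r(δ) = sup{ r > 0 : q*(r) r ≤ δ } for δ > 0. Let D > 0, δ > 0 and x ≥ 0. If x + Σ_{j=1}^∞ min{x, D Δ(j)} ≤ δ, then x ≤ D · r(δ/D). -/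
open Filter Set

/-!
Put `y = x / D` and `q = q*(y)`. Minimality of `q` gives `(q - 1) y < β(q - 1)` (or `q = 1`).
Since `Δ` is nonincreasing, `Σ_{j ≥ 1} min(x, DΔ(j)) ≥ min((q - 1) x, Dβ(q - 1)) = (q - 1) x`,
hence `q x ≤ δ`, so `y` is admissible in the supremum defining `r(δ / D)`.
-/

/-- `β(q) = Σ_{j=q}^∞ Δ(j)`. -/
noncomputable def beta (Δ : ℕ → ℝ) (q : ℕ) : ℝ := ∑' j : ℕ, Δ (q + j)

/-- `q*(x) = min{q ∈ ℕ, q ≥ 1 : β(q) ≤ q x}`. -/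
noncomputable def qstar (Δ : ℕ → ℝ) (x : ℝ) : ℕ := sInf {q : ℕ | 1 ≤ q ∧ beta Δ q ≤ q * x}

/-- `r(δ) = sup{r > 0 : q*(r)·r ≤ δ}`. -/
noncomputable def rr (Δ : ℕ → ℝ) (δ : ℝ) : ℝ :=
  sSup {r : ℝ | 0 < r ∧ (qstar Δ r : ℝ) * r ≤ δ}

/-- If the first `n` terms of `Σ_{j ≥ 1} min x (f j)` are not all `x`, then from the first
index where `f` drops below `x` on, every term is `f j`, so the sum dominates `Σ_{j ≥ n} f j`. -/
theorem min_mul_tsum_le_tsum_min {f : ℕ → ℝ} (hf0 : ∀ j, 0 ≤ f j) (hf : Antitone f)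
    (hfs : Summable f) {x : ℝ} (hx : 0 ≤ x) (n : ℕ) :
    min (n * x) (∑' i, f (n + i)) ≤ ∑' i, min x (f (1 + i)) := by
  set g : ℕ → ℝ := fun i => min x (f (1 + i))
  have hg0 : ∀ i, 0 ≤ g i := fun i => le_min hx (hf0 _)
  have hgs : Summable g := Summable.of_nonneg_of_le hg0 (fun i => min_le_right _ _)
    (hfs.comp_injective (add_right_injective 1))
  rcases n with _ | m
  · simpa using min_le_left 0 _ |>.trans (tsum_nonneg hg0)
  by_cases hxf : x ≤ f (m + 1)
  · have head : ∀ i ∈ Finset.range (m + 1), g i = x := fun i hi =>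
      min_eq_left (hxf.trans (hf (by simp at hi; omega)))
    calc min ((m + 1 : ℕ) * x) _ ≤ (m + 1 : ℕ) * x := min_le_left _ _
      _ = ∑ i ∈ Finset.range (m + 1), g i := by simp [Finset.sum_congr rfl head]
      _ ≤ ∑' i, g i := hgs.sum_le_tsum _ (fun i _ => hg0 i)
  · have tail : ∀ i, g (m + i) = f (m + 1 + i) := fun i =>
      min_eq_right ((hf (by omega)).trans (not_le.1 hxf).le) |>.trans (by congr 1; omega)
    calc min ((m + 1 : ℕ) * x) _ ≤ ∑' i, f (m + 1 + i) := min_le_right _ _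
      _ = ∑' i, g (m + i) := tsum_congr fun i => (tail i).symm
      _ ≤ ∑' i, g i := tsum_comp_le_tsum_of_inj hgs hg0 (add_right_injective m)

section

variable {Δ : ℕ → ℝ}

theorem beta_antitone (hΔ : Antitone Δ) (hΔs : Summable Δ) : Antitone (beta Δ) :=
  fun p q hpq => Summable.tsum_le_tsum (fun j => hΔ (by omega))
    (hΔs.comp_injective (add_right_injective q)) (hΔs.comp_injective (add_right_injective p))

/-- `β(q) ≤ β(0) ≤ q r` as soon as `q ≥ β(0) / r`. -/
theorem qstar_set_nonempty (hΔ : Antitone Δ) (hΔs : Summable Δ) {r : ℝ} (hr : 0 < r) :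
    {q : ℕ | 1 ≤ q ∧ beta Δ q ≤ q * r}.Nonempty := by
  refine ⟨max 1 ⌈beta Δ 0 / r⌉₊, le_max_left _ _, ?_⟩
  calc beta Δ (max 1 ⌈beta Δ 0 / r⌉₊) ≤ beta Δ 0 := beta_antitone hΔ hΔs (Nat.zero_le _)
    _ ≤ ⌈beta Δ 0 / r⌉₊ * r := (div_le_iff₀ hr).1 (Nat.le_ceil _)
    _ ≤ (max 1 ⌈beta Δ 0 / r⌉₊ : ℕ) * r := by gcongr; exact le_max_right _ _

theorem one_le_qstar (hΔ : Antitone Δ) (hΔs : Summable Δ) {r : ℝ} (hr : 0 < r) :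
    1 ≤ qstar Δ r :=
  (Nat.sInf_mem (qstar_set_nonempty hΔ hΔs hr)).1

theorem pred_qstar_mul_le_beta (hΔ0 : ∀ j, 0 ≤ Δ j) (r : ℝ) :
    ((qstar Δ r - 1 : ℕ) : ℝ) * r ≤ beta Δ (qstar Δ r - 1) := by
  rcases Nat.eq_zero_or_pos (qstar Δ r - 1) with h | h
  · rw [h, Nat.cast_zero, zero_mul]
    exact tsum_nonneg fun j => hΔ0 _
  · by_contra! hlt
    have : qstar Δ r ≤ qstar Δ r - 1 := Nat.sInf_le ⟨h, hlt.le⟩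
    omega

theorem le_rr (hΔ : Antitone Δ) (hΔs : Summable Δ) {r δ : ℝ} (hr : 0 < r)
    (h : (qstar Δ r : ℝ) * r ≤ δ) : r ≤ rr Δ δ := by
  refine le_csSup ⟨δ, fun s ⟨hs, hsδ⟩ => ?_⟩ ⟨hr, h⟩
  have : (1 : ℝ) ≤ qstar Δ s := by exact_mod_cast one_le_qstar hΔ hΔs hs
  nlinarith

theorem rr_nonneg (δ : ℝ) : 0 ≤ rr Δ δ :=
  Real.sSup_nonneg fun _ hr => hr.1.le

end

theorem V_functional_to_L2_general (Δ : ℕ → ℝ) (hΔ0 : ∀ j, 0 ≤ Δ j) (hΔmono : Antitone Δ)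
    -- `Σ_{j=1}^∞ Δ(j) < ∞`
    (hsum : Summable (fun j : ℕ => Δ (1 + j)))
    (D δ x : ℝ) (hD : 0 < D) (hx : 0 ≤ x)
    (h : x + ∑' j : ℕ, min x (D * Δ (1 + j)) ≤ δ) :
    x ≤ D * rr Δ (δ / D) := by
  rcases hx.eq_or_lt with rfl | hx0
  · exact mul_nonneg hD.le (rr_nonneg _)
  have hΔs : Summable Δ := (summable_nat_add_iff 1).1 (by simpa only [add_comm] using hsum)
  set y := x / D
  have hxy : x = D * y := (mul_div_cancel₀ x hD.ne').symm
  set n := qstar Δ y - 1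
  have hn : (n : ℝ) * x ≤ ∑' j : ℕ, min x (D * Δ (1 + j)) := by
    have hβ : (n : ℝ) * x ≤ ∑' i, D * Δ (n + i) := by
      rw [tsum_mul_left, hxy, mul_left_comm]
      exact mul_le_mul_of_nonneg_left (pred_qstar_mul_le_beta hΔ0 y) hD.le
    exact (min_eq_left hβ).symm.le.trans <| min_mul_tsum_le_tsum_min
      (fun j => mul_nonneg hD.le (hΔ0 j)) (hΔmono.const_mul hD.le) (hΔs.mul_left D) hx n
  have hq : (qstar Δ y : ℝ) * y ≤ δ / D := by
    have : (qstar Δ y : ℝ) ≤ n + 1 := by exact_mod_cast Nat.le_add_of_sub_le le_rfl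
    rw [le_div_iff₀ hD]
    nlinarith
  rw [hxy]
  exact mul_le_mul_of_nonneg_left (le_rr hΔmono hΔs (div_pos hx0 hD) hq) hD.le

/-- **From the `V`-functional to the `L²`-norm.** -/
theorem V_functional_to_L2 (Δ : ℕ → ℝ) (hΔ0 : ∀ j, 0 ≤ Δ j) (hΔmono : Antitone Δ)
    -- `Σ_{j=1}^∞ Δ(j) < ∞`
    (hsum : Summable (fun j : ℕ => Δ (1 + j)))
    (D δ x : ℝ) (hD : 0 < D) (hδ : 0 < δ) (hx : 0 ≤ x)
    (h : x + ∑' j : ℕ, min x (D * Δ (1 + j)) ≤ δ) :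
    x ≤ D * rr Δ (δ / D) :=
  V_functional_to_L2_general Δ hΔ0 hΔmono hsum D δ x hD hx h
end

section
/- Hölder smoothness of conditional kernel moments (Example 2): Let κ ∈ {1,2}, h > 0, x ∈ ℝ, C_∞ > 0, L_G > 0 and s ∈ (0, 1/κ]. Let K : ℝ → ℝ be measurable with ∫_ℝ |K(w)|^κ dw < ∞, and let (g_z)_{z∈ℝ} be a family of probability densities on ℝ such that 0 ≤ g_z(y) ≤ C_∞ for all z, y and |g_z(y) − g_{z′}(y)| ≤ L_G |z − z′| for all y, z, z′. Define μ^{(κ)}(z) := h^{1/κ − 1/2} ( ∫_ℝ K(w)^κ g_z(x + w h) dw )^{1/κ} (with the convention that for κ = 2 the inner integral is nonnegative). Then for all z, z′ ∈ ℝ: |μ^{(κ)}(z) − μ^{(κ)}(z′)| ≤ h^{1/κ − 1/2} ( ∫_ℝ |K(w)|^κ dw )^{1/κ} · C_∞^{1/κ − s} L_G^s |z − z′|^s. -/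
open MeasureTheory

/-!
Write `I z = ∫ K^κ g_z(x + w h) dw`. Since every `g_z` takes values in `[0, C_∞]` and is
`L_G`-Lipschitz in `z`, `|g_z - g_{z'}| ≤ min(C_∞, L_G |z - z'|)
≤ C_∞^{1 - κ s} (L_G |z - z'|)^{κ s}`, so `|I z - I z'|` is at most `∫ |K|^κ` times this bound.
The map `t ↦ t^{1/κ}` is the identity for `κ = 1` and `1/2`-Hölder with constant `1` on
`[0, ∞)` for `κ = 2`, where `I ≥ 0`; taking `κ`-th roots gives the claim.
-/

namespace Real

lemma abs_rpow_sub_rpow_le_abs_sub_rpow {a b p : ℝ} (ha : 0 ≤ a) (hb : 0 ≤ b) (hp0 : 0 ≤ p)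
    (hp1 : p ≤ 1) : |a ^ p - b ^ p| ≤ |a - b| ^ p := by
  wlog hba : b ≤ a generalizing a b
  · rw [abs_sub_comm, abs_sub_comm a]
    exact this hb ha (le_of_not_ge hba)
  rw [abs_of_nonneg (sub_nonneg.2 (rpow_le_rpow hb hba hp0)), abs_of_nonneg (sub_nonneg.2 hba),
    sub_le_iff_le_add]
  calc a ^ p = (a - b + b) ^ p := by rw [sub_add_cancel]
    _ ≤ (a - b) ^ p + b ^ p := rpow_add_le_add_rpow (sub_nonneg.2 hba) hb hp0 hp1

lemma min_le_rpow_mul_rpow {a b s : ℝ} (ha : 0 ≤ a) (hb : 0 ≤ b) (hs0 : 0 ≤ s) (hs1 : s ≤ 1) :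
    min a b ≤ a ^ (1 - s) * b ^ s := by
  rcases (le_min ha hb).eq_or_lt with hm | hm
  · rw [← hm]
    positivity
  calc min a b = min a b ^ (1 - s) * min a b ^ s := by rw [← rpow_add hm, sub_add_cancel, rpow_one]
    _ ≤ a ^ (1 - s) * b ^ s := by
      gcongr
      exacts [min_le_left a b, min_le_right a b]

end Real

lemma abs_integral_mul_sub_integral_mul_le {α : Type*} [MeasurableSpace α] {μ : Measure α}
    {f u v : α → ℝ} {m : ℝ} (hf : Integrable f μ) (hfu : Integrable (fun a => f a * u a) μ)
    (hfv : Integrable (fun a => f a * v a) μ) (huv : ∀ a, |u a - v a| ≤ m) :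
    |∫ a, f a * u a ∂μ - ∫ a, f a * v a ∂μ| ≤ (∫ a, |f a| ∂μ) * m := by
  rw [← integral_sub hfu hfv, ← integral_mul_const m, ← Real.norm_eq_abs]
  refine norm_integral_le_of_norm_le (hf.abs.mul_const m) (ae_of_all _ fun a => ?_)
  rw [Real.norm_eq_abs, ← mul_sub, abs_mul]
  exact mul_le_mul_of_nonneg_left (huv a) (abs_nonneg _)

lemma MeasureTheory.Integrable.mul_comp_affine_of_abs_le {f u : ℝ → ℝ} {C : ℝ} (hf : Integrable f)
    (hu : Measurable u) (hC : ∀ y, |u y| ≤ C) (x h : ℝ) :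
    Integrable (fun w => f w * u (x + w * h)) :=
  hf.mul_bdd (hu.comp (measurable_const.add (measurable_id.mul_const h))).aestronglyMeasurable
    (ae_of_all _ fun _ => hC _)

theorem conditional_kernel_moment_holder_general
    (κ : ℕ) (hκ : κ = 1 ∨ κ = 2) (h : ℝ) (hh : 0 < h) (x : ℝ)
    (Cinf L_G s : ℝ) (hCinf : 0 < Cinf) (hLG : 0 < L_G)
    (hs0 : 0 < s) (hs1 : s ≤ 1 / (κ : ℝ))
    (K : ℝ → ℝ) (hKmeas : Measurable K)
    (hKint : Integrable (fun w => |K w| ^ (κ : ℕ)) (volume : Measure ℝ))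
    (g : ℝ → ℝ → ℝ)
    (hg_meas : ∀ z, Measurable (g z))
    -- the `g_z` are probability densities …
    (hg_nonneg : ∀ z y, 0 ≤ g z y)
    -- … bounded by `C_∞` …
    (hg_bdd : ∀ z y, g z y ≤ Cinf)
    -- … and Lipschitz in `z` with constant `L_G`
    (hg_lip : ∀ y z z', |g z y - g z' y| ≤ L_G * |z - z'|) :
    ∀ z z' : ℝ,
      |(h ^ ((κ : ℝ)⁻¹ - 1/2) * (∫ w, K w ^ (κ : ℕ) * g z (x + w * h)) ^ ((κ : ℝ)⁻¹))
        - (h ^ ((κ : ℝ)⁻¹ - 1/2) * (∫ w, K w ^ (κ : ℕ) * g z' (x + w * h)) ^ ((κ : ℝ)⁻¹))| ≤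
      h ^ ((κ : ℝ)⁻¹ - 1/2) * (∫ w, |K w| ^ (κ : ℕ)) ^ ((κ : ℝ)⁻¹)
        * Cinf ^ ((κ : ℝ)⁻¹ - s) * L_G ^ s * |z - z'| ^ s := by
  intro z z'
  set I : ℝ → ℝ := fun u => ∫ w, K w ^ κ * g u (x + w * h)
  set A := ∫ w, |K w| ^ κ
  set δ := L_G * |z - z'|
  have hκ0 : (0 : ℝ) < κ := by rcases hκ with rfl | rfl <;> norm_num
  have hκs : κ * s ≤ 1 := by rwa [le_div_iff₀' hκ0] at hs1
  have hKκ : Integrable (fun w => K w ^ κ) :=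
    (integrable_norm_iff (hKmeas.pow_const κ).aestronglyMeasurable).1
      (by simpa only [Real.norm_eq_abs, abs_pow] using hKint)
  have hg_abs : ∀ u y, |g u y| ≤ Cinf := fun u y =>
    abs_le.2 ⟨by linarith [hg_nonneg u y], hg_bdd u y⟩
  have hg_diff : ∀ y, |g z y - g z' y| ≤ min Cinf δ := fun y =>
    le_min (abs_sub_le_of_nonneg_of_le (hg_nonneg _ _) (hg_bdd _ _) (hg_nonneg _ _) (hg_bdd _ _))
      (hg_lip _ _ _)
  have hdiff : |I z - I z'| ≤ A * (Cinf ^ (1 - κ * s) * δ ^ (κ * s)) := by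
    have hI := abs_integral_mul_sub_integral_mul_le hKκ
      (hKκ.mul_comp_affine_of_abs_le (hg_meas z) (hg_abs z) x h)
      (hKκ.mul_comp_affine_of_abs_le (hg_meas z') (hg_abs z') x h) fun w => hg_diff (x + w * h)
    simp only [abs_pow] at hI
    exact hI.trans (mul_le_mul_of_nonneg_left
      (Real.min_le_rpow_mul_rpow hCinf.le (by positivity) (by positivity) hκs) (by positivity))
  -- for `κ = 1` the integrals may be negative, but then the root is the identity
  have hroot : |I z ^ (κ : ℝ)⁻¹ - I z' ^ (κ : ℝ)⁻¹| ≤ |I z - I z'| ^ (κ : ℝ)⁻¹ := by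
    rcases hκ with rfl | rfl
    · simp
    · have hI : ∀ u, 0 ≤ I u := fun u =>
        integral_nonneg fun w => mul_nonneg (by positivity) (hg_nonneg u _)
      exact Real.abs_rpow_sub_rpow_le_abs_sub_rpow (hI z) (hI z') (by norm_num) (by norm_num)
  calc _ = h ^ ((κ : ℝ)⁻¹ - 1/2) * |I z ^ (κ : ℝ)⁻¹ - I z' ^ (κ : ℝ)⁻¹| := by
        rw [← mul_sub, abs_mul, abs_of_nonneg (by positivity)]
    _ ≤ h ^ ((κ : ℝ)⁻¹ - 1/2) * (A * (Cinf ^ (1 - κ * s) * δ ^ (κ * s))) ^ (κ : ℝ)⁻¹ := by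
        gcongr
        exact hroot.trans (by gcongr)
    _ = _ := by
        rw [Real.mul_rpow (by positivity) (by positivity), Real.mul_rpow (by positivity)
          (by positivity), ← Real.rpow_mul hCinf.le, ← Real.rpow_mul (by positivity),
          Real.mul_rpow hLG.le (abs_nonneg _), sub_mul, one_mul, mul_comm (κ : ℝ) s,
          mul_assoc, mul_inv_cancel₀ hκ0.ne', mul_one]
        ring

/-- **Hölder smoothness of conditional kernel moments (Example 2).** -/
theorem conditional_kernel_moment_holder
    (κ : ℕ) (hκ : κ = 1 ∨ κ = 2) (h : ℝ) (hh : 0 < h) (x : ℝ)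
    (Cinf L_G s : ℝ) (hCinf : 0 < Cinf) (hLG : 0 < L_G)
    (hs0 : 0 < s) (hs1 : s ≤ 1 / (κ : ℝ))
    (K : ℝ → ℝ) (hKmeas : Measurable K)
    (hKint : Integrable (fun w => |K w| ^ (κ : ℕ)) (volume : Measure ℝ))
    (g : ℝ → ℝ → ℝ)
    (hg_meas : ∀ z, Measurable (g z))
    -- the `g_z` are probability densities …
    (hg_nonneg : ∀ z y, 0 ≤ g z y) (hg_prob : ∀ z, ∫ y, g z y = 1)
    -- … bounded by `C_∞` …
    (hg_bdd : ∀ z y, g z y ≤ Cinf)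
    -- … and Lipschitz in `z` with constant `L_G`
    (hg_lip : ∀ y z z', |g z y - g z' y| ≤ L_G * |z - z'|) :
    ∀ z z' : ℝ,
      |(h ^ ((κ : ℝ)⁻¹ - 1/2) * (∫ w, K w ^ (κ : ℕ) * g z (x + w * h)) ^ ((κ : ℝ)⁻¹))
        - (h ^ ((κ : ℝ)⁻¹ - 1/2) * (∫ w, K w ^ (κ : ℕ) * g z' (x + w * h)) ^ ((κ : ℝ)⁻¹))| ≤
      h ^ ((κ : ℝ)⁻¹ - 1/2) * (∫ w, |K w| ^ (κ : ℕ)) ^ ((κ : ℝ)⁻¹)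
        * Cinf ^ ((κ : ℝ)⁻¹ - s) * L_G ^ s * |z - z'| ^ s :=
  conditional_kernel_moment_holder_general κ hκ h hh x Cinf L_G s hCinf hLG hs0 hs1 K hKmeas hKint g
    hg_meas hg_nonneg hg_bdd hg_lip
end
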